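/- arXiv:2601.07482 — 3 statements merged into one kernel-verified Lean document; each statement's English description precedes it below -/
import Mathlib

section
/- For every natural number m ≥ 1 and all real numbers τ, β with 0 < τ ≤ β, the interval integral ∫_τ^β (1 - (1-t)^{m-1})·(τ/t) dt equals τ·Σ_{i=1}^{m-1} C(m-1,i)·(-1)^{i+1}·(β^i - τ^i)/i. -/
/-!
By the binomial theorem `1 - (1 - t) ^ n = t * p t` for an explicit polynomial `p`, so the integrand
agrees with `τ * p t` off the null set `{0}` and the integral is computed term by term.
-/

open Finset MeasureTheory

theorem one_sub_one_sub_pow_eq_mul_sum {R : Type*} [CommRing R] (n : ℕ) (t : R) :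
    1 - (1 - t) ^ n = t * ∑ i ∈ range n, (n.choose (i + 1) : R) * (-1) ^ i * t ^ i := by
  rw [sub_eq_add_neg (1 : R) t, add_comm, add_pow, sum_range_succ']
  simp only [one_pow, mul_one, pow_zero, Nat.choose_zero_right, Nat.cast_one,
    sub_add_cancel_right, mul_sum, ← sum_neg_distrib]
  refine sum_congr rfl fun i _ => ?_
  rw [neg_pow]
  ring

theorem integral_one_sub_one_sub_pow_div (n : ℕ) (a b : ℝ) :
    ∫ t in a..b, (1 - (1 - t) ^ n) / t =
      ∑ i ∈ range n,
        (n.choose (i + 1) : ℝ) * (-1) ^ i * (b ^ (i + 1) - a ^ (i + 1)) / (i + 1) := by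
  have h_eq : ∀ᵐ t, t ∈ Set.uIoc a b →
      (1 - (1 - t) ^ n) / t = ∑ i ∈ range n, (n.choose (i + 1) : ℝ) * (-1) ^ i * t ^ i := by
    filter_upwards [Measure.ae_ne volume 0] with t ht _
    rw [one_sub_one_sub_pow_eq_mul_sum, mul_div_cancel_left₀ _ ht]
  rw [intervalIntegral.integral_congr_ae h_eq,
    intervalIntegral.integral_finsetSum fun i _ =>
      (intervalIntegral.intervalIntegrable_pow _).const_mul _]
  refine sum_congr rfl fun i _ => ?_
  rw [intervalIntegral.integral_const_mul, integral_pow, mul_div_assoc]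

theorem stmt_3_general (m : ℕ) (τ β : ℝ) :
    ∫ t in τ..β, (1 - (1 - t) ^ (m - 1)) * (τ / t) =
      τ * ∑ i ∈ Finset.Icc 1 (m - 1),
        ((m - 1).choose i : ℝ) * (-1) ^ (i + 1) * (β ^ i - τ ^ i) / i := by
  simp_rw [mul_div_left_comm _ τ, intervalIntegral.integral_const_mul,
    integral_one_sub_one_sub_pow_div]
  rw [← Ico_add_one_right_eq_Icc, sum_Ico_eq_sum_range]
  refine congrArg _ (sum_congr rfl fun i _ => ?_)
  push_cast
  ring_nf

theorem stmt_3 (m : ℕ) (hm : 1 ≤ m) (τ β : ℝ) (hτ : 0 < τ) (hτβ : τ ≤ β) :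
    ∫ t in τ..β, (1 - (1 - t) ^ (m - 1)) * (τ / t) =
      τ * ∑ i ∈ Finset.Icc 1 (m - 1),
        ((m - 1).choose i : ℝ) * (-1) ^ (i + 1) * (β ^ i - τ ^ i) / i :=
  stmt_3_general m τ β
end

section
/- For every natural number m ≥ 1 and all real numbers τ, β with 0 < τ ≤ β, the interval integral ∫_τ^β [ (1 - (1-t)^{m-1})·(τ/t) + (1-t)^{m-1} ] dt equals τ·Σ_{i=1}^{m-1} C(m-1,i)·(-1)^{i+1}·(β^i - τ^i)/i + ((1-τ)^m - (1-β)^m)/m. -/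
/-! Off `t = 0` the integrand is the polynomial `τ * (1 - (1 - t) ^ (m - 1)) / t + (1 - t) ^ (m - 1)`,
and `(1 - (1 - t) ^ (m - 1)) / t = ∑ i ∈ [1, m - 1], C(m - 1, i) (-1) ^ (i + 1) t ^ (i - 1)` by the
binomial theorem. A single point does not affect the integral, so the identity holds for all `τ, β`
and follows by integrating this polynomial term by term. -/

open Finset

lemma one_sub_one_sub_pow_eq_sum (n : ℕ) (t : ℝ) :
    1 - (1 - t) ^ n = ∑ i ∈ Icc 1 n, (n.choose i : ℝ) * (-1) ^ (i + 1) * t ^ i := by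
  have hrange : range (n + 1) = insert 0 (Icc 1 n) := by
    ext i; simp only [mem_range, mem_insert, mem_Icc]; omega
  rw [sub_eq_neg_add, ← neg_add_eq_sub, add_pow, hrange, sum_insert (by simp)]
  simp only [pow_zero, Nat.sub_zero, one_pow, Nat.choose_zero_right, Nat.cast_one, mul_one,
    neg_add_rev, ← sum_neg_distrib, neg_add_cancel_right]
  refine sum_congr rfl fun i _ => ?_
  rw [neg_pow]
  ring

lemma one_sub_one_sub_pow_div {t : ℝ} (n : ℕ) (ht : t ≠ 0) :
    (1 - (1 - t) ^ n) / t = ∑ i ∈ Icc 1 n, (n.choose i : ℝ) * (-1) ^ (i + 1) * t ^ (i - 1) := by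
  rw [one_sub_one_sub_pow_eq_sum, sum_div]
  refine sum_congr rfl fun i hi => ?_
  obtain ⟨j, rfl⟩ : ∃ j, i = j + 1 := ⟨i - 1, by grind⟩
  rw [Nat.add_sub_cancel]
  field_simp
  ring

lemma integral_one_sub_pow (n : ℕ) (a b : ℝ) :
    ∫ t in a..b, (1 - t) ^ n = ((1 - a) ^ (n + 1) - (1 - b) ^ (n + 1)) / (n + 1) := by
  rw [intervalIntegral.integral_comp_sub_left (· ^ n), integral_pow]

lemma integral_sum_Icc_mul_pow_pred (c : ℕ → ℝ) (n : ℕ) (a b : ℝ) :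
    ∫ t in a..b, ∑ i ∈ Icc 1 n, c i * t ^ (i - 1) = ∑ i ∈ Icc 1 n, c i * (b ^ i - a ^ i) / i := by
  rw [intervalIntegral.integral_finsetSum fun i _ =>
    (Continuous.intervalIntegrable (by fun_prop) _ _)]
  refine sum_congr rfl fun i hi => ?_
  obtain ⟨j, rfl⟩ : ∃ j, i = j + 1 := ⟨i - 1, by grind⟩
  rw [intervalIntegral.integral_const_mul, integral_pow]
  push_cast
  ring

theorem integral_one_sub_one_sub_pow_mul_div_add (n : ℕ) (τ β : ℝ) :
    ∫ t in τ..β, ((1 - (1 - t) ^ n) * (τ / t) + (1 - t) ^ n) =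
      τ * (∑ i ∈ Icc 1 n, (n.choose i : ℝ) * (-1) ^ (i + 1) * (β ^ i - τ ^ i) / i)
        + ((1 - τ) ^ (n + 1) - (1 - β) ^ (n + 1)) / (n + 1) := by
  have hae : ∀ᵐ t, t ∈ Set.uIoc τ β → (1 - (1 - t) ^ n) * (τ / t) + (1 - t) ^ n =
      τ * ∑ i ∈ Icc 1 n, (n.choose i : ℝ) * (-1) ^ (i + 1) * t ^ (i - 1) + (1 - t) ^ n := by
    filter_upwards [MeasureTheory.volume.ae_ne 0] with t ht _
    rw [← one_sub_one_sub_pow_div n ht]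
    ring
  rw [intervalIntegral.integral_congr_ae hae,
    intervalIntegral.integral_add (Continuous.intervalIntegrable (by fun_prop) _ _)
      (Continuous.intervalIntegrable (by fun_prop) _ _),
    intervalIntegral.integral_const_mul, integral_sum_Icc_mul_pow_pred, integral_one_sub_pow]

theorem stmt_6_general (m : ℕ) (hm : 1 ≤ m) (τ β : ℝ) :
    ∫ t in τ..β, ((1 - (1 - t) ^ (m - 1)) * (τ / t) + (1 - t) ^ (m - 1)) =
      τ * (∑ i ∈ Finset.Icc 1 (m - 1),
          ((m - 1).choose i : ℝ) * (-1) ^ (i + 1) * (β ^ i - τ ^ i) / i)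
        + ((1 - τ) ^ m - (1 - β) ^ m) / m := by
  obtain ⟨n, rfl⟩ : ∃ n, m = n + 1 := ⟨m - 1, by omega⟩
  simpa using integral_one_sub_one_sub_pow_mul_div_add n τ β

theorem stmt_6 (m : ℕ) (hm : 1 ≤ m) (τ β : ℝ) (hτ : 0 < τ) (hτβ : τ ≤ β) :
    ∫ t in τ..β, ((1 - (1 - t) ^ (m - 1)) * (τ / t) + (1 - t) ^ (m - 1)) =
      τ * (∑ i ∈ Finset.Icc 1 (m - 1),
          ((m - 1).choose i : ℝ) * (-1) ^ (i + 1) * (β ^ i - τ ^ i) / i)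
        + ((1 - τ) ^ m - (1 - β) ^ m) / m :=
  stmt_6_general m hm τ β
end

section
/- Fix natural numbers m ≥ 1, k ≥ 0, m₂ ≥ 0, real numbers δ and γ, and a real number τ with 0 < τ ≤ 1. Define for β ∈ (0,1] the function C₄(β) = τ·Σ_{i=1}^{m-1} C(m-1,i)·(-1)^{i+1}·(β^i - τ^i)/i + τ·Σ_{i=1}^{k} C(k,i)·(-1)^{i+1}·(1 - β^i)/i + ((1-β)^{k+1}/(k+1))·[ (1 - (1-β)^{m₂})·(1-δ)·(τ/β) + (1-β)^{m₂}·(1-γ) ]. Then ∫_τ^1 C₄(β) dβ = τ·Σ_{i=1}^{m-1} C(m-1,i)·(-1)^{i+1}·( (1-τ^{i+1})/(i(i+1)) - τ^i·(1-τ)/i ) + τ·Σ_{i=1}^{k} C(k,i)·(-1)^{i+1}·( (1-τ)/i - (1-τ^{i+1})/(i(i+1)) ) + ((1-δ)·τ/(k+1))·[ Σ_{i=1}^{k+1} C(k+1,i)·(-1)^i·(1-τ^i)/i - Σ_{i=1}^{k+1+m₂} C(k+1+m₂,i)·(-1)^i·(1-τ^i)/i ] + ((1-γ)/(k+1))·(1-τ)^{k+2+m₂}/(k+2+m₂).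 -/
/-!
The only non-polynomial part of `C₄` is the factor `τ / β`. Writing
`(1 - (1 - β) ^ m₂) (1 - β) ^ (k + 1)` as
`((1 - β) ^ (k + 1) - 1) - ((1 - β) ^ (k + 1 + m₂) - 1)`, it enters only through the
quotients `((1 - β) ^ n - 1) / β`, which by the binomial theorem agree, away from the null
set `{0}`, with the polynomials `∑_{i=1}^n C(n,i) (-1)^i β^(i-1)`. Hence the integrand is
almost everywhere a polynomial, and it is integrated term by term.
-/

open Finset intervalIntegral
open MeasureTheory (volume ae_restrict_of_ae Measure.ae_ne)

lemma sum_Icc_choose_mul_neg_one_pow_mul_pow (n : ℕ) (x : ℝ) :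
    ∑ i ∈ Icc 1 n, (n.choose i : ℝ) * (-1) ^ i * x ^ i = (1 - x) ^ n - 1 := by
  rw [← neg_add_eq_sub x 1, add_pow, range_eq_Ico, sum_eq_sum_Ico_succ_bot n.succ_pos,
    Nat.succ_eq_add_one, zero_add, Ico_add_one_right_eq_Icc]
  simp only [pow_zero, one_pow, mul_one, Nat.choose_zero_right, Nat.cast_one,
    add_sub_cancel_left]
  exact sum_congr rfl fun i _ => by rw [neg_pow]; ring

lemma one_sub_pow_sub_one_div_eq_sum (n : ℕ) {x : ℝ} (hx : x ≠ 0) :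
    ((1 - x) ^ n - 1) / x = ∑ i ∈ Icc 1 n, (n.choose i : ℝ) * (-1) ^ i * x ^ (i - 1) := by
  rw [div_eq_iff hx, ← sum_Icc_choose_mul_neg_one_pow_mul_pow, sum_mul]
  refine sum_congr rfl fun i hi => ?_
  rw [mul_assoc _ (x ^ (i - 1)), ← pow_succ, Nat.sub_add_cancel (mem_Icc.mp hi).1]

lemma integral_sum_choose_mul_neg_one_pow_mul_pow_pred (n : ℕ) (a b : ℝ) :
    ∫ x in a..b, ∑ i ∈ Icc 1 n, (n.choose i : ℝ) * (-1) ^ i * x ^ (i - 1) =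
      ∑ i ∈ Icc 1 n, (n.choose i : ℝ) * (-1) ^ i * (b ^ i - a ^ i) / i := by
  rw [integral_finsetSum fun i _ => Continuous.intervalIntegrable (by fun_prop) a b]
  refine sum_congr rfl fun i hi => ?_
  rw [integral_const_mul, integral_pow, Nat.sub_add_cancel (mem_Icc.mp hi).1,
    Nat.cast_sub (mem_Icc.mp hi).1]
  ring

lemma one_sub_pow_mul_eq_sum {x : ℝ} (hx : x ≠ 0) (n m : ℕ) (p q : ℝ) :
    (1 - x) ^ n * ((1 - (1 - x) ^ m) * (p / x) + (1 - x) ^ m * q) =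
      p * (∑ i ∈ Icc 1 n, (n.choose i : ℝ) * (-1) ^ i * x ^ (i - 1) -
          ∑ i ∈ Icc 1 (n + m), ((n + m).choose i : ℝ) * (-1) ^ i * x ^ (i - 1)) +
        q * (1 - x) ^ (n + m) := by
  rw [← one_sub_pow_sub_one_div_eq_sum n hx, ← one_sub_pow_sub_one_div_eq_sum (n + m) hx]
  field_simp
  ring

lemma one_sub_pow_mul_ae_eq (n m : ℕ) (p q : ℝ) :
    (fun x => (1 - x) ^ n * ((1 - (1 - x) ^ m) * (p / x) + (1 - x) ^ m * q)) =ᵐ[volume]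
      fun x => p * (∑ i ∈ Icc 1 n, (n.choose i : ℝ) * (-1) ^ i * x ^ (i - 1) -
          ∑ i ∈ Icc 1 (n + m), ((n + m).choose i : ℝ) * (-1) ^ i * x ^ (i - 1)) +
        q * (1 - x) ^ (n + m) :=
  (Measure.ae_ne volume 0).mono fun _ hx => one_sub_pow_mul_eq_sum hx n m p q

lemma intervalIntegrable_one_sub_pow_mul (n m : ℕ) (p q a b : ℝ) :
    IntervalIntegrable (fun x => (1 - x) ^ n * ((1 - (1 - x) ^ m) * (p / x) + (1 - x) ^ m * q))
      volume a b :=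
  (Continuous.intervalIntegrable (by fun_prop) a b).congr_ae
    (ae_restrict_of_ae (one_sub_pow_mul_ae_eq n m p q).symm)

lemma integral_one_sub_pow_mul (n m : ℕ) (p q a b : ℝ) :
    ∫ x in a..b, (1 - x) ^ n * ((1 - (1 - x) ^ m) * (p / x) + (1 - x) ^ m * q) =
      p * (∑ i ∈ Icc 1 n, (n.choose i : ℝ) * (-1) ^ i * (b ^ i - a ^ i) / i -
          ∑ i ∈ Icc 1 (n + m), ((n + m).choose i : ℝ) * (-1) ^ i * (b ^ i - a ^ i) / i) +
        q * ((1 - a) ^ (n + m + 1) - (1 - b) ^ (n + m + 1)) / (n + m + 1) := by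
  rw [integral_congr_ae ((one_sub_pow_mul_ae_eq n m p q).mono fun _ hx _ => hx),
    integral_add (Continuous.intervalIntegrable (by fun_prop) a b)
      (Continuous.intervalIntegrable (by fun_prop) a b),
    integral_const_mul, integral_const_mul,
    integral_sub (Continuous.intervalIntegrable (by fun_prop) a b)
      (Continuous.intervalIntegrable (by fun_prop) a b),
    integral_sum_choose_mul_neg_one_pow_mul_pow_pred,
    integral_sum_choose_mul_neg_one_pow_mul_pow_pred,
    integral_comp_sub_left (fun x => x ^ (n + m)), integral_pow]
  push_cast
  ring

lemma integral_sum_mul_pow_sub_pow_div (s : Finset ℕ) (c : ℕ → ℝ) (t a b : ℝ) :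
    ∫ x in a..b, ∑ i ∈ s, c i * (x ^ i - t ^ i) / i =
      ∑ i ∈ s, c i * ((b ^ (i + 1) - a ^ (i + 1)) / (i * (i + 1)) - t ^ i * (b - a) / i) := by
  rw [integral_finsetSum fun i _ => Continuous.intervalIntegrable (by fun_prop) a b]
  refine sum_congr rfl fun i _ => ?_
  rw [integral_div, integral_const_mul,
    integral_sub (intervalIntegrable_pow i) intervalIntegrable_const,
    integral_pow, integral_const, smul_eq_mul, ← div_div]
  ring

lemma integral_sum_mul_one_sub_pow_div (s : Finset ℕ) (c : ℕ → ℝ) (a b : ℝ) :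
    ∫ x in a..b, ∑ i ∈ s, c i * (1 - x ^ i) / i =
      ∑ i ∈ s, c i * ((b - a) / i - (b ^ (i + 1) - a ^ (i + 1)) / (i * (i + 1))) := by
  rw [integral_finsetSum fun i _ => Continuous.intervalIntegrable (by fun_prop) a b]
  refine sum_congr rfl fun i _ => ?_
  rw [integral_div, integral_const_mul,
    integral_sub intervalIntegrable_const (intervalIntegrable_pow i),
    integral_pow, integral_const, smul_eq_mul, ← div_div]
  ring

theorem stmt_10_general (m k m₂ : ℕ) (δ γ τ : ℝ) :
    ∫ β in τ..1,
        (τ * (∑ i ∈ Finset.Icc 1 (m - 1),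
            ((m - 1).choose i : ℝ) * (-1) ^ (i + 1) * (β ^ i - τ ^ i) / i)
          + τ * (∑ i ∈ Finset.Icc 1 k,
            (k.choose i : ℝ) * (-1) ^ (i + 1) * (1 - β ^ i) / i)
          + ((1 - β) ^ (k + 1) / (k + 1)) *
            ((1 - (1 - β) ^ m₂) * (1 - δ) * (τ / β) + (1 - β) ^ m₂ * (1 - γ))) =
      τ * (∑ i ∈ Finset.Icc 1 (m - 1),
          ((m - 1).choose i : ℝ) * (-1) ^ (i + 1) *
            ((1 - τ ^ (i + 1)) / (i * (i + 1)) - τ ^ i * (1 - τ) / i))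
        + τ * (∑ i ∈ Finset.Icc 1 k,
          (k.choose i : ℝ) * (-1) ^ (i + 1) *
            ((1 - τ) / i - (1 - τ ^ (i + 1)) / (i * (i + 1))))
        + ((1 - δ) * τ / (k + 1)) *
          ((∑ i ∈ Finset.Icc 1 (k + 1),
              ((k + 1).choose i : ℝ) * (-1) ^ i * (1 - τ ^ i) / i)
            - (∑ i ∈ Finset.Icc 1 (k + 1 + m₂),
              ((k + 1 + m₂).choose i : ℝ) * (-1) ^ i * (1 - τ ^ i) / i))
        + ((1 - γ) / (k + 1)) * (1 - τ) ^ (k + 2 + m₂) / (k + 2 + m₂) := by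
  have htail (β : ℝ) : (1 - β) ^ (k + 1) / (k + 1) *
      ((1 - (1 - β) ^ m₂) * (1 - δ) * (τ / β) + (1 - β) ^ m₂ * (1 - γ)) =
      ((k : ℝ) + 1)⁻¹ * ((1 - β) ^ (k + 1) *
        ((1 - (1 - β) ^ m₂) * ((1 - δ) * τ / β) + (1 - β) ^ m₂ * (1 - γ))) := by
    ring
  simp only [htail]
  rw [integral_add (Continuous.intervalIntegrable (by fun_prop) τ 1)
      ((intervalIntegrable_one_sub_pow_mul _ _ _ _ τ 1).const_mul _),
    integral_add (Continuous.intervalIntegrable (by fun_prop) τ 1)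
      (Continuous.intervalIntegrable (by fun_prop) τ 1),
    integral_const_mul, integral_const_mul, integral_const_mul,
    integral_sum_mul_pow_sub_pow_div _ (fun i => ((m - 1).choose i : ℝ) * (-1) ^ (i + 1)),
    integral_sum_mul_one_sub_pow_div _ (fun i => (k.choose i : ℝ) * (-1) ^ (i + 1)),
    integral_one_sub_pow_mul, sub_self, zero_pow (by omega),
    show k + 1 + m₂ + 1 = k + 2 + m₂ by ring]
  simp only [one_pow]
  push_cast
  ring

theorem stmt_10 (m k m₂ : ℕ) (hm : 1 ≤ m) (δ γ τ : ℝ) (hτ : 0 < τ) (hτ1 : τ ≤ 1) :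
    ∫ β in τ..1,
        (τ * (∑ i ∈ Finset.Icc 1 (m - 1),
            ((m - 1).choose i : ℝ) * (-1) ^ (i + 1) * (β ^ i - τ ^ i) / i)
          + τ * (∑ i ∈ Finset.Icc 1 k,
            (k.choose i : ℝ) * (-1) ^ (i + 1) * (1 - β ^ i) / i)
          + ((1 - β) ^ (k + 1) / (k + 1)) *
            ((1 - (1 - β) ^ m₂) * (1 - δ) * (τ / β) + (1 - β) ^ m₂ * (1 - γ))) =
      τ * (∑ i ∈ Finset.Icc 1 (m - 1),
          ((m - 1).choose i : ℝ) * (-1) ^ (i + 1) *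
            ((1 - τ ^ (i + 1)) / (i * (i + 1)) - τ ^ i * (1 - τ) / i))
        + τ * (∑ i ∈ Finset.Icc 1 k,
          (k.choose i : ℝ) * (-1) ^ (i + 1) *
            ((1 - τ) / i - (1 - τ ^ (i + 1)) / (i * (i + 1))))
        + ((1 - δ) * τ / (k + 1)) *
          ((∑ i ∈ Finset.Icc 1 (k + 1),
              ((k + 1).choose i : ℝ) * (-1) ^ i * (1 - τ ^ i) / i)
            - (∑ i ∈ Finset.Icc 1 (k + 1 + m₂),
              ((k + 1 + m₂).choose i : ℝ) * (-1) ^ i * (1 - τ ^ i) / i))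
        + ((1 - γ) / (k + 1)) * (1 - τ) ^ (k + 2 + m₂) / (k + 2 + m₂) :=
  stmt_10_general m k m₂ δ γ τ
end
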